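/- arXiv:1504.03552 — 2 statements merged into one kernel-verified Lean document; each statement's English description precedes it below -/
import Mathlib

section
/- Let $(\Omega,\mathcal G,Q)$ be a probability space, $\mathcal F_t \subseteq \mathcal G_t \subseteq \mathcal G$ sub-$\sigma$-algebras, and $\tau$ a random time such that $\{\tau > t\}$ is $\mathcal G_t$-measurable. Then for any integrable $\mathcal G$-measurable random variable $Y$, almost surely $E^Q[\mathbf 1_{\{\tau>t\}} Y \mid \mathcal G_t] \cdot Q(\tau>t \mid \mathcal F_t) = Q(\tau>t\mid\mathcal G_t) \cdot E^Q[\mathbf 1_{\{\tau>t\}} Y \mid \mathcal F_t]$ on the event $\{\tau > t\}$, provided $\mathcal G_t = \mathcal F_t \vee \sigma(\mathbf 1_{\{\tau \le s\}} : s \le t)$. -/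
/-!
On `A = {t < τ}` the σ-algebras `Gt = Ft ⊔ σ(τ ≤ s : s ≤ t)` and `Ft` have the same trace, since
every generator `{τ ≤ s}` misses `A`. By Doob–Dynkin on the subspace `A`, the `Gt`-measurable
variable `E[1_A Y | Gt]`, which vanishes off `A`, equals `g · 1_A` for an `Ft`-measurable `g`.
The tower property and pulling `g` out give `E[1_A Y | Ft] = g · Q(A | Ft)`, while `Q(A | Gt) = 1_A`.
-/

open MeasureTheory

theorem MeasurableSpace.comap_subtype_val_sup_generateFrom_of_disjoint {Ω : Type*}
    {A : Set Ω} {m : MeasurableSpace Ω} {S : Set (Set Ω)} (hS : ∀ s ∈ S, Disjoint s A) :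
    (m ⊔ generateFrom S).comap ((↑) : A → Ω) = m.comap (↑) := by
  rw [comap_sup, comap_generateFrom, sup_eq_left]
  refine generateFrom_le ?_
  rintro _ ⟨s, hs, rfl⟩
  rw [Set.preimage_eq_empty ((hS s hs).mono_right Subtype.range_coe.subset)]
  exact MeasurableSet.empty

theorem MeasureTheory.StronglyMeasurable.exists_eqOn_of_comap_subtype_val_le {Ω Z : Type*}
    [Nonempty Z] [TopologicalSpace Z] [TopologicalSpace.IsCompletelyMetrizableSpace Z]
    {A : Set Ω} {m₁ m₂ : MeasurableSpace Ω}
    (htrace : m₂.comap ((↑) : A → Ω) ≤ m₁.comap (↑)) {f : Ω → Z} (hf : StronglyMeasurable[m₂] f) :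
    ∃ g, StronglyMeasurable[m₁] g ∧ Set.EqOn f g A := by
  have hfA : StronglyMeasurable[m₁.comap ((↑) : A → Ω)] (f ∘ (↑)) :=
    (hf.comp_measurable (comap_measurable (m := m₂) _)).mono htrace
  obtain ⟨g, hg, hfg⟩ := hfA.exists_eq_measurable_comp (mY := m₁)
  exact ⟨g, hg, fun ω hω => congrFun hfg ⟨ω, hω⟩⟩

theorem ae_condExp_indicator_mul_condExp_eq_of_comap_subtype_val_le {Ω : Type*}
    {m₁ m₂ mΩ : MeasurableSpace Ω} {μ : Measure[mΩ] Ω} [IsFiniteMeasure μ]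
    (h₁₂ : m₁ ≤ m₂) (h₂ : m₂ ≤ mΩ) {A : Set Ω} (hA : MeasurableSet[m₂] A)
    (htrace : m₂.comap ((↑) : A → Ω) ≤ m₁.comap (↑)) {X : Ω → ℝ} (hX : Integrable X μ) :
    ∀ᵐ ω ∂μ, ω ∈ A →
      μ[A.indicator X | m₂] ω * μ[A.indicator 1 | m₁] ω = μ[A.indicator X | m₁] ω := by
  have : IsFiniteMeasure (μ.trim h₂) := isFiniteMeasure_trim h₂
  set f := μ[A.indicator X | m₂]
  have hA₀ : MeasurableSet[mΩ] A := h₂ _ hA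
  obtain ⟨g, hg, hfg⟩ :=
    stronglyMeasurable_condExp.exists_eqOn_of_comap_subtype_val_le (f := f) htrace
  have hf_factor : f =ᵐ[μ] g * A.indicator 1 := by
    have hf_supp : f =ᵐ[μ] A.indicator f := by
      have := condExp_indicator (m := m₂) (hX.indicator hA₀) hA
      rwa [Set.indicator_indicator, Set.inter_self] at this
    refine hf_supp.trans (.of_forall fun ω => ?_)
    by_cases hω : ω ∈ A
    · simp [hω, hfg hω]
    · simp [hω]
  have hpull : μ[A.indicator X | m₁] =ᵐ[μ] g * μ[A.indicator 1 | m₁] :=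
    calc μ[A.indicator X | m₁] =ᵐ[μ] μ[f | m₁] := (condExp_condExp_of_le h₁₂ h₂).symm
      _ =ᵐ[μ] μ[g * A.indicator 1 | m₁] := condExp_congr_ae hf_factor
      _ =ᵐ[μ] g * μ[A.indicator 1 | m₁] := condExp_mul_of_stronglyMeasurable_left hg
          (integrable_condExp.congr hf_factor) ((integrable_const 1).indicator hA₀)
  filter_upwards [hpull] with ω hω hωA
  rw [hω, Pi.mul_apply, hfg hωA]

/-- The "key lemma" of credit risk theory. -/
theorem key_lemma {Ω : Type*} [m : MeasurableSpace Ω] (Q : Measure Ω) [IsProbabilityMeasure Q]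
    (Ft Gt : MeasurableSpace Ω) (hFG : Ft ≤ Gt) (hG : Gt ≤ m)
    (τ : Ω → ℝ) (t : ℝ)
    (hτGt : MeasurableSet[Gt] {ω | t < τ ω})
    (hGen : Gt = Ft ⊔ MeasurableSpace.generateFrom {A | ∃ s ≤ t, A = {ω | τ ω ≤ s}})
    (Y : Ω → ℝ) (hY : Integrable Y Q) :
    ∀ᵐ ω ∂Q, t < τ ω →
      (Q[Set.indicator {ω' | t < τ ω'} Y | Gt]) ω
          * (Q[Set.indicator {ω' | t < τ ω'} (fun _ => (1 : ℝ)) | Ft]) ω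
        = (Q[Set.indicator {ω' | t < τ ω'} (fun _ => (1 : ℝ)) | Gt]) ω
          * (Q[Set.indicator {ω' | t < τ ω'} Y | Ft]) ω := by
  set A := {ω | t < τ ω}
  have htrace : Gt.comap ((↑) : A → Ω) ≤ Ft.comap (↑) := by
    refine (hGen ▸ MeasurableSpace.comap_subtype_val_sup_generateFrom_of_disjoint ?_).le
    rintro _ ⟨s, hs, rfl⟩
    exact Set.disjoint_left.2 fun ω hτs htτ => (hτs.trans hs).not_gt htτ
  have hQA : Q[A.indicator (fun _ => (1 : ℝ)) | Gt] = A.indicator (fun _ => 1) :=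
    condExp_of_stronglyMeasurable hG (stronglyMeasurable_const.indicator hτGt)
      ((integrable_const (1 : ℝ)).indicator (μ := Q) (hG _ hτGt))
  filter_upwards [ae_condExp_indicator_mul_condExp_eq_of_comap_subtype_val_le hFG hG hτGt
    htrace hY] with ω hω hωA
  rw [hQA, Set.indicator_of_mem (s := A) hωA, one_mul]
  exact hω hωA
end

section
/- Let $\mathcal N$ denote the standard normal CDF, $c_1 > 0$, $\lambda > 0$ with $c_1^2 > 2\lambda$, and $t < T$. Then $\lambda e^{\lambda t}\int_t^T \mathcal N(c_1\sqrt{T-u}) e^{-\lambda u}\, du = \mathcal N(c_1\sqrt{T-t}) - \frac{c_1 e^{-\lambda(T-t)}}{\sqrt{c_1^2 - 2\lambda}}\mathcal N\big(\sqrt{(c_1^2 - 2\lambda)(T-t)}\big) + \frac{e^{-\lambda(T-t)}}{2}\Big(\frac{c_1}{\sqrt{c_1^2 - 2\lambda}} - 1\Big).$ -/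
/-!
Integration by parts: differentiating `-exp (-l u) N(c √(T - u)) / l` gives the integrand plus
`c exp (-l u) φ(c √(T - u)) / (2 l √(T - u))`. Completing the square in the exponent gives
`exp (-l u) φ(c √(T - u)) = exp (-l T) φ(a √(T - u))` with `a² = c² - 2l`, so this extra
term is itself the derivative of a multiple of `N(a √(T - u))`, and the integral has a closed
form.
-/

/-- The standard normal cumulative distribution function. -/
noncomputable def stdNormalCDF (x : ℝ) : ℝ :=
  ∫ z in Set.Iic x, Real.exp (-z ^ 2 / 2) / Real.sqrt (2 * Real.pi)

open Real MeasureTheory Set ProbabilityTheory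

noncomputable def stdNormalPDF (x : ℝ) : ℝ := exp (-x ^ 2 / 2) / √(2 * π)

lemma stdNormalPDF_eq_gaussianPDFReal : stdNormalPDF = gaussianPDFReal 0 1 := by
  ext x
  simp [stdNormalPDF, gaussianPDFReal, div_eq_inv_mul]

lemma stdNormalCDF_eq_integral_Iic (x : ℝ) :
    stdNormalCDF x = ∫ z in Iic x, stdNormalPDF z :=
  rfl

lemma continuous_stdNormalPDF : Continuous stdNormalPDF := by
  unfold stdNormalPDF; fun_prop

lemma integrable_stdNormalPDF : Integrable stdNormalPDF := by
  rw [stdNormalPDF_eq_gaussianPDFReal]; exact integrable_gaussianPDFReal 0 1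

lemma integral_stdNormalPDF : ∫ x, stdNormalPDF x = 1 := by
  rw [stdNormalPDF_eq_gaussianPDFReal]; exact integral_gaussianPDFReal_eq_one 0 one_ne_zero

lemma stdNormalPDF_neg (x : ℝ) : stdNormalPDF (-x) = stdNormalPDF x := by
  simp [stdNormalPDF]

lemma hasDerivAt_stdNormalCDF (x : ℝ) : HasDerivAt stdNormalCDF (stdNormalPDF x) x := by
  have h := (intervalIntegral.integral_hasDerivAt_right
    (integrable_stdNormalPDF.intervalIntegrable (a := 0) (b := x))
    (continuous_stdNormalPDF.stronglyMeasurableAtFilter _ _)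
    continuous_stdNormalPDF.continuousAt).const_add (stdNormalCDF 0)
  refine h.congr_of_eventuallyEq (Filter.Eventually.of_forall fun y => ?_)
  beta_reduce
  rw [← intervalIntegral.integral_Iic_sub_Iic integrable_stdNormalPDF.integrableOn
    integrable_stdNormalPDF.integrableOn, stdNormalCDF_eq_integral_Iic,
    stdNormalCDF_eq_integral_Iic]
  ring

@[fun_prop]
lemma continuous_stdNormalCDF : Continuous stdNormalCDF :=
  continuous_iff_continuousAt.2 fun x => (hasDerivAt_stdNormalCDF x).continuousAt

lemma stdNormalCDF_zero : stdNormalCDF 0 = 1 / 2 := by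
  have hsymm : ∫ z in Iic (0 : ℝ), stdNormalPDF z = ∫ z in Ioi 0, stdNormalPDF z := by
    simpa [stdNormalPDF_neg] using integral_comp_neg_Iic (0 : ℝ) stdNormalPDF
  have hsum := intervalIntegral.integral_Iic_add_Ioi (b := (0 : ℝ))
    integrable_stdNormalPDF.integrableOn integrable_stdNormalPDF.integrableOn
  rw [integral_stdNormalPDF, ← hsymm] at hsum
  rw [stdNormalCDF_eq_integral_Iic]
  linarith

lemma hasDerivAt_stdNormalCDF_mul_sqrt_sub (c : ℝ) {T u : ℝ} (hu : u < T) :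
    HasDerivAt (fun v => stdNormalCDF (c * √(T - v)))
      (-(c / (2 * √(T - u))) * stdNormalPDF (c * √(T - u))) u := by
  have hsqrt : HasDerivAt (fun v => √(T - v)) (1 / (2 * √(T - u)) * (-1)) u :=
    (hasDerivAt_sqrt (sub_pos.2 hu).ne').comp u ((hasDerivAt_id u).const_sub T)
  exact ((hasDerivAt_stdNormalCDF _).comp u (hsqrt.const_mul c)).congr_deriv (by ring)

lemma exp_mul_stdNormalPDF_mul_sqrt_sub {c l a T u : ℝ} (ha : a ^ 2 = c ^ 2 - 2 * l)
    (hu : u ≤ T) :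
    exp (-l * u) * stdNormalPDF (c * √(T - u))
      = exp (-l * T) * stdNormalPDF (a * √(T - u)) := by
  simp only [stdNormalPDF, mul_div_assoc', ← exp_add, mul_pow, sq_sqrt (sub_nonneg.2 hu), ha]
  congr 2
  ring

lemma hasDerivAt_primitive_stdNormalCDF_mul_sqrt_sub_mul_exp {c l a T u : ℝ} (hl : l ≠ 0)
    (ha₀ : a ≠ 0) (ha : a ^ 2 = c ^ 2 - 2 * l) (hu : u < T) :
    HasDerivAt
      (fun v => c * exp (-l * T) / (l * a) * stdNormalCDF (a * √(T - v))
        - exp (-l * v) * stdNormalCDF (c * √(T - v)) / l)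
      (stdNormalCDF (c * √(T - u)) * exp (-l * u)) u := by
  have hexp : HasDerivAt (fun v => exp (-l * v)) (exp (-l * u) * (-l)) u := by
    simpa using ((hasDerivAt_id u).const_mul (-l)).exp
  refine (((hasDerivAt_stdNormalCDF_mul_sqrt_sub a hu).const_mul _).sub
    ((hexp.mul (hasDerivAt_stdNormalCDF_mul_sqrt_sub c hu)).div_const l)).congr_deriv ?_
  have hgauss := exp_mul_stdNormalPDF_mul_sqrt_sub ha hu.le
  have hsqrt : √(T - u) ≠ 0 := (sqrt_pos.2 (sub_pos.2 hu)).ne'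
  field_simp
  simp only [neg_mul] at hgauss ⊢
  linear_combination c * hgauss

lemma integral_stdNormalCDF_mul_sqrt_sub_mul_exp {c l a t T : ℝ} (hl : l ≠ 0) (ha₀ : a ≠ 0)
    (ha : a ^ 2 = c ^ 2 - 2 * l) (htT : t ≤ T) :
    ∫ u in t..T, stdNormalCDF (c * √(T - u)) * exp (-l * u)
      = exp (-l * t) * stdNormalCDF (c * √(T - t)) / l
        - c * exp (-l * T) / (l * a) * stdNormalCDF (a * √(T - t))
        + exp (-l * T) / (2 * l) * (c / a - 1) := by
  have hcont : Continuous fun u => stdNormalCDF (c * √(T - u)) * exp (-l * u) := by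
    fun_prop
  rw [intervalIntegral.integral_eq_sub_of_hasDerivAt_of_le htT (by fun_prop)
    (fun u hu => hasDerivAt_primitive_stdNormalCDF_mul_sqrt_sub_mul_exp hl ha₀ ha hu.2)
    (hcont.intervalIntegrable t T)]
  simp only [sub_self, sqrt_zero, mul_zero, stdNormalCDF_zero]
  field_simp
  ring

theorem A1_case_gt_general (c₁ l t T : ℝ) (hl : 0 < l)
    (hcase : 2 * l < c₁ ^ 2) (htT : t < T) :
    l * Real.exp (l * t) *
        ∫ u in t..T, stdNormalCDF (c₁ * Real.sqrt (T - u)) * Real.exp (-l * u)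
      = stdNormalCDF (c₁ * Real.sqrt (T - t))
        - c₁ * Real.exp (-l * (T - t)) / Real.sqrt (c₁ ^ 2 - 2 * l)
            * stdNormalCDF (Real.sqrt ((c₁ ^ 2 - 2 * l) * (T - t)))
        + Real.exp (-l * (T - t)) / 2 * (c₁ / Real.sqrt (c₁ ^ 2 - 2 * l) - 1) := by
  have hdisc : 0 < c₁ ^ 2 - 2 * l := by linarith
  have ha₀ : √(c₁ ^ 2 - 2 * l) ≠ 0 := (sqrt_pos.2 hdisc).ne'
  rw [integral_stdNormalCDF_mul_sqrt_sub_mul_exp hl.ne' ha₀ (sq_sqrt hdisc.le) htT.le,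
    sqrt_mul hdisc.le]
  have hexp : exp (-l * (T - t)) = exp (l * t) * exp (-l * T) := by
    rw [← exp_add]; ring_nf
  have hexp' : exp (l * t) * exp (-(l * t)) = 1 := by
    rw [← exp_add, add_neg_cancel, exp_zero]
  rw [hexp]
  field_simp
  linear_combination 2 * stdNormalCDF (c₁ * √(T - t)) * hexp'

/-- Explicit value of `A₁(t,T)` in the case `c₁² > 2λ`. -/
theorem A1_case_gt (c₁ l t T : ℝ) (hc₁ : 0 < c₁) (hl : 0 < l)
    (hcase : 2 * l < c₁ ^ 2) (htT : t < T) :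
    l * Real.exp (l * t) *
        ∫ u in t..T, stdNormalCDF (c₁ * Real.sqrt (T - u)) * Real.exp (-l * u)
      = stdNormalCDF (c₁ * Real.sqrt (T - t))
        - c₁ * Real.exp (-l * (T - t)) / Real.sqrt (c₁ ^ 2 - 2 * l)
            * stdNormalCDF (Real.sqrt ((c₁ ^ 2 - 2 * l) * (T - t)))
        + Real.exp (-l * (T - t)) / 2 * (c₁ / Real.sqrt (c₁ ^ 2 - 2 * l) - 1) :=
  A1_case_gt_general c₁ l t T hl hcase htT
end
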